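/- arXiv:1502.00241 — 3 statements merged into one kernel-verified Lean document; each statement's English description precedes it below -/
import Mathlib

section
/- Every triangle (including degenerate ones) in ℝ² is similar to a triangle with vertices A=(0,0), C=(1,0), and B=(x,y) where y ≥ 0, x² + y² ≥ 1, and (x-1)² + y² ≤ 1. -/
/-!
Identify the plane with `ℂ` and label the vertices `A, B, C` so that `BC ≤ AC ≤ AB`.
The map `z ↦ (z - A) / (C - A)`, followed by complex conjugation if necessary, is a similarity
sending `A, C` to `0, 1` and `B` to a point `w` with `0 ≤ Im w`, `|w| = AB / AC ≥ 1` and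
`|w - 1| = BC / AC ≤ 1`.
-/

open Real EuclideanGeometry

/-- A point of the Euclidean plane given by Cartesian coordinates. -/
noncomputable def pt (x y : ℝ) : EuclideanSpace ℝ (Fin 2) := !₂[x, y]

/-- A plane similarity transformation: a map multiplying all distances by a
fixed positive ratio (equivalently, a composition of translations, rotations,
reflections and dilations). -/
def IsPlaneSimilarity (f : EuclideanSpace ℝ (Fin 2) → EuclideanSpace ℝ (Fin 2)) : Prop :=
  ∃ r : ℝ, 0 < r ∧ ∀ p q, dist (f p) (f q) = r * dist p q

theorem exists_relabel_dist_sorted {P : Type*} [PseudoMetricSpace P] (U V W : P) :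
    ∃ A B C : P, ({U, V, W} : Multiset P) = {A, B, C} ∧
      dist A C ≤ dist A B ∧ dist B C ≤ dist A C := by
  wlog hVW : dist V W ≤ dist U V ∧ dist V W ≤ dist U W generalizing U V W
  · rcases le_total (dist U V) (dist U W) with hUV | hUW
    · obtain ⟨A, B, C, h, hAC, hBC⟩ := this W V U (by
        rw [dist_comm W V, dist_comm W U, dist_comm V U]
        exact ⟨le_of_not_gt fun h => hVW ⟨h.le, h.le.trans hUV⟩, hUV⟩)
      refine ⟨A, B, C, ?_, hAC, hBC⟩
      rw [← h]
      simp only [Multiset.insert_eq_cons, ← Multiset.cons_zero, Multiset.cons_swap]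
    · obtain ⟨A, B, C, h, hAC, hBC⟩ := this V U W (by
        rw [dist_comm V U]
        exact ⟨hUW, le_of_not_gt fun h => hVW ⟨h.le.trans hUW, h.le⟩⟩)
      exact ⟨A, B, C, h ▸ Multiset.cons_swap U V {W}, hAC, hBC⟩
  rcases le_total (dist U W) (dist U V) with h | h
  · exact ⟨U, V, W, rfl, h, hVW.2⟩
  · exact ⟨U, W, V, by rw [Multiset.pair_comm V W], h, dist_comm W V ▸ hVW.1⟩

namespace Complex

theorem dist_div_sub_div_sub (a c u v : ℂ) :
    dist ((u - a) / (c - a)) ((v - a) / (c - a)) = ‖c - a‖⁻¹ * dist u v := by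
  rw [dist_eq, div_sub_div_same, sub_sub_sub_cancel_right, norm_div, dist_eq, inv_mul_eq_div]

theorem exists_linearIsometry_map_one_im_nonneg (w : ℂ) :
    ∃ ψ : ℂ →ₗᵢ[ℝ] ℂ, ψ 1 = 1 ∧ 0 ≤ (ψ w).im := by
  rcases le_total 0 w.im with hw | hw
  · exact ⟨LinearIsometry.id, rfl, hw⟩
  · exact ⟨conjLIE.toLinearIsometry, by simp, by simpa using hw⟩

theorem exists_similarity_normal_form {a b c : ℂ} (hac : a ≠ c) (h₁ : dist a c ≤ dist a b)
    (h₂ : dist b c ≤ dist a c) :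
    ∃ g : ℂ → ℂ, (∃ r, 0 < r ∧ ∀ u v, dist (g u) (g v) = r * dist u v) ∧
      g a = 0 ∧ g c = 1 ∧ 0 ≤ (g b).im ∧ 1 ≤ ‖g b‖ ∧ ‖g b - 1‖ ≤ 1 := by
  have hca : c - a ≠ 0 := sub_ne_zero.mpr hac.symm
  have hpos : 0 < ‖c - a‖ := norm_pos_iff.mpr hca
  obtain ⟨ψ, hψ1, hψb⟩ := exists_linearIsometry_map_one_im_nonneg ((b - a) / (c - a))
  refine ⟨fun z => ψ ((z - a) / (c - a)), ⟨‖c - a‖⁻¹, inv_pos.mpr hpos, fun u v => ?_⟩,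
    by simp, by simp [div_self hca, hψ1], hψb, ?_, ?_⟩
  · rw [ψ.dist_map, dist_div_sub_div_sub]
  · rw [ψ.norm_map, norm_div, one_le_div hpos, ← dist_eq, ← dist_eq, dist_comm, dist_comm b]
    exact h₁
  · rw [← hψ1, ← map_sub, ψ.norm_map, div_sub_one hca, sub_sub_sub_cancel_right, norm_div,
      div_le_one hpos, ← dist_eq, ← dist_eq, dist_comm c]
    exact h₂

theorem one_le_norm_iff (z : ℂ) : 1 ≤ ‖z‖ ↔ 1 ≤ z.re ^ 2 + z.im ^ 2 := by
  rw [norm_eq_sqrt_sq_add_sq, Real.one_le_sqrt]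

theorem norm_sub_one_le_one_iff (z : ℂ) : ‖z - 1‖ ≤ 1 ↔ (z.re - 1) ^ 2 + z.im ^ 2 ≤ 1 := by
  rw [norm_eq_sqrt_sq_add_sq, Real.sqrt_le_one, sub_re, sub_im, one_re, one_im, sub_zero]

theorem orthonormalBasisOneI_repr_eq_pt (z : ℂ) : orthonormalBasisOneI.repr z = pt z.re z.im :=
  rfl

end Complex

open Complex in
theorem isPlaneSimilarity_repr_comp {g : ℂ → ℂ} {r : ℝ} (hr : 0 < r)
    (hg : ∀ u v, dist (g u) (g v) = r * dist u v) :
    IsPlaneSimilarity (orthonormalBasisOneI.repr ∘ g ∘ orthonormalBasisOneI.repr.symm) :=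
  ⟨r, hr, fun p q => by simp only [Function.comp_apply, LinearIsometryEquiv.dist_map, hg]⟩

/-- Every triangle (including degenerate ones) is similar to one with vertices
(0,0), (1,0) and a point of S_B. -/
theorem stmt2 (U V W : EuclideanSpace ℝ (Fin 2)) (h : ¬ (U = V ∧ V = W ∧ U = W)) :
    ∃ x y : ℝ, 0 ≤ y ∧ 1 ≤ x^2 + y^2 ∧ (x - 1)^2 + y^2 ≤ 1 ∧
      ∃ f : EuclideanSpace ℝ (Fin 2) → EuclideanSpace ℝ (Fin 2),
        IsPlaneSimilarity f ∧
        Multiset.map f {U, V, W} = ({pt 0 0, pt x y, pt 1 0} : Multiset (EuclideanSpace ℝ (Fin 2))) := by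
  obtain ⟨A, B, C, hUVW, hAB, hBC⟩ := exists_relabel_dist_sorted U V W
  have hAC : A ≠ C := by
    rintro rfl
    have hBA : B = A := dist_le_zero.mp (by simpa using hBC)
    have hmem : ∀ X ∈ ({U, V, W} : Multiset _), X = A := by
      rw [hUVW, hBA]
      simp
    exact h ⟨by simp [hmem], by simp [hmem], by simp [hmem]⟩
  set e := Complex.orthonormalBasisOneI.repr
  obtain ⟨g, ⟨r, hr, hg⟩, hga, hgc, him, hnorm, hnorm_sub⟩ :=
    Complex.exists_similarity_normal_form (b := e.symm B) (e.symm.injective.ne hAC)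
      (by simpa using hAB) (by simpa using hBC)
  refine ⟨(g (e.symm B)).re, (g (e.symm B)).im, him, (Complex.one_le_norm_iff _).mp hnorm,
    (Complex.norm_sub_one_le_one_iff _).mp hnorm_sub, e ∘ g ∘ e.symm,
    isPlaneSimilarity_repr_comp hr hg, ?_⟩
  rw [hUVW]
  simp only [Multiset.insert_eq_cons, Multiset.map_cons, Multiset.map_singleton,
    Function.comp_apply, hga, hgc, e, Complex.orthonormalBasisOneI_repr_eq_pt, Complex.zero_re,
    Complex.zero_im, Complex.one_re, Complex.one_im]
end

section
/- If A₁ and A₂ are distinct points in S_A = {(x,y) : y ≥ 0, x ≥ 1/2, (x-1)² + y² ≥ 1}, then the triangles with vertices A₁, (0,0), (1,0) and A₂, (0,0), (1,0) are not similar. -/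
open Real EuclideanGeometry

/-!
For `A ∈ S_A` the base `BC` is a shortest side and `AB` a longest one: `1 ≤ |AC| ≤ |AB|`.
A similarity of ratio `r` scales the multiset of pairwise distances of the vertex multiset by `r`,
so comparing shortest sides forces `r = 1`, and then the orderings force `|A₁B| = |A₂B|` and
`|A₁C| = |A₂C|`. A point of the closed upper half-plane is determined by its distances to two
distinct points of the `x`-axis.
-/

section PairDists

variable {E F : Type*} [PseudoMetricSpace E] [PseudoMetricSpace F]

/-- Diagonal pairs are included, so every point contributes a `0`. -/
def pairDists (s : Multiset E) : Multiset ℝ :=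
  s.sym2.map (Sym2.lift ⟨dist, dist_comm⟩)

theorem pairDists_map {f : E → F} {r : ℝ} (hf : ∀ p q, dist (f p) (f q) = r * dist p q)
    (s : Multiset E) : pairDists (s.map f) = (pairDists s).map (r * ·) := by
  rw [pairDists, pairDists, Multiset.sym2_map, Multiset.map_map, Multiset.map_map]
  refine Multiset.map_congr rfl fun z _ => ?_
  induction z using Sym2.ind
  simp [hf]

theorem pairDists_triple (x y z : E) :
    pairDists {x, y, z} = {0, 0, 0} + {dist x y, dist x z, dist y z} := by
  have hz : ({z} : Multiset E).sym2 = {s(z, z)} := rfl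
  simp only [pairDists, Multiset.insert_eq_cons, Multiset.sym2_cons, hz, Multiset.map_cons,
    Multiset.map_singleton, Multiset.map_add, Sym2.lift_mk, dist_self]
  simp only [← Multiset.singleton_add]
  abel

end PairDists

theorem eq_of_map_mul_eq {r a b a' b' : ℝ} (hr : 0 < r) (hb : 1 ≤ b) (hba : b ≤ a)
    (hb' : 1 ≤ b') (hba' : b' ≤ a')
    (h : ({a, b, 1} : Multiset ℝ).map (r * ·) = {a', b', 1}) : a = a' ∧ b = b' := by
  have one_le_r : 1 ≤ r := by
    have hmem : r * 1 ∈ ({a', b', 1} : Multiset ℝ) := h ▸ Multiset.mem_map_of_mem _ (by simp)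
    simp only [mul_one, Multiset.insert_eq_cons, Multiset.mem_cons, Multiset.mem_singleton] at hmem
    rcases hmem with rfl | rfl | rfl <;> linarith
  have r_le_one : r ≤ 1 := by
    have hmem : (1 : ℝ) ∈ ({a, b, 1} : Multiset ℝ).map (r * ·) := h ▸ by simp
    simp only [Multiset.insert_eq_cons, Multiset.map_cons, Multiset.map_singleton,
      Multiset.mem_cons, Multiset.mem_singleton] at hmem
    rcases hmem with h1 | h1 | h1 <;> nlinarith
  obtain rfl : r = 1 := le_antisymm r_le_one one_le_r
  have hpair : ({a, b} : Multiset ℝ) = {a', b'} := by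
    simp only [one_mul, Multiset.map_id', Multiset.insert_eq_cons, ← Multiset.singleton_add] at h ⊢
    rw [← add_left_inj {1}]
    convert h using 1 <;> abel
  simp only [Multiset.insert_eq_cons, Multiset.cons_eq_cons, Multiset.singleton_inj,
    Multiset.singleton_eq_cons_iff] at hpair
  rcases hpair with ⟨rfl, rfl⟩ | ⟨-, -, ⟨rfl, -⟩, rfl, -⟩
  · exact ⟨rfl, rfl⟩
  · constructor <;> linarith

theorem dist_pt_sq (A : EuclideanSpace ℝ (Fin 2)) (x y : ℝ) :
    dist A (pt x y) ^ 2 = (A 0 - x) ^ 2 + (A 1 - y) ^ 2 := by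
  rw [EuclideanSpace.dist_eq, Real.sq_sqrt (by positivity), Fin.sum_univ_two]
  simp [pt, Real.dist_eq, sq_abs]

theorem dist_pt_zero_pt_one : dist (pt 0 0) (pt 1 0) = 1 := by
  simp [EuclideanSpace.dist_eq, pt]

theorem eq_of_dist_pt_eq_of_dist_pt_eq {P Q : EuclideanSpace ℝ (Fin 2)} {u v : ℝ} (huv : u ≠ v)
    (hP : 0 ≤ P 1) (hQ : 0 ≤ Q 1) (hu : dist P (pt u 0) = dist Q (pt u 0))
    (hv : dist P (pt v 0) = dist Q (pt v 0)) : P = Q := by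
  have hu2 := congrArg (· ^ 2) hu
  have hv2 := congrArg (· ^ 2) hv
  simp only [dist_pt_sq, sub_zero] at hu2 hv2
  have hx : P 0 = Q 0 := by
    have h : (2 * (v - u)) * P 0 = (2 * (v - u)) * Q 0 := by linear_combination hu2 - hv2
    exact mul_left_cancel₀ (by intro h0; apply huv; linarith) h
  have hy : P 1 = Q 1 := by
    rw [hx] at hu2
    exact (pow_left_inj₀ hP hQ two_ne_zero).1 (by linarith)
  ext i
  fin_cases i
  · exact hx
  · exact hy

theorem one_le_dist_pt_one_zero {A : EuclideanSpace ℝ (Fin 2)}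
    (h : 1 ≤ (A 0 - 1) ^ 2 + (A 1) ^ 2) : 1 ≤ dist A (pt 1 0) := by
  rw [← one_le_sq_iff₀ dist_nonneg, dist_pt_sq, sub_zero]
  exact h

theorem dist_pt_one_zero_le_dist_pt_zero_zero {A : EuclideanSpace ℝ (Fin 2)} (h : 1 / 2 ≤ A 0) :
    dist A (pt 1 0) ≤ dist A (pt 0 0) := by
  rw [← pow_le_pow_iff_left₀ dist_nonneg dist_nonneg two_ne_zero, dist_pt_sq, dist_pt_sq]
  nlinarith

/-- Distinct points of S_A give non-similar triangles on the base (0,0)-(1,0). -/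
theorem stmt5 (A₁ A₂ : EuclideanSpace ℝ (Fin 2))
    (h₁ : 0 ≤ A₁ 1 ∧ 1/2 ≤ A₁ 0 ∧ 1 ≤ (A₁ 0 - 1)^2 + (A₁ 1)^2)
    (h₂ : 0 ≤ A₂ 1 ∧ 1/2 ≤ A₂ 0 ∧ 1 ≤ (A₂ 0 - 1)^2 + (A₂ 1)^2)
    (hne : A₁ ≠ A₂) :
    ¬ ∃ f : EuclideanSpace ℝ (Fin 2) → EuclideanSpace ℝ (Fin 2),
        IsPlaneSimilarity f ∧
        Multiset.map f {A₁, pt 0 0, pt 1 0} = ({A₂, pt 0 0, pt 1 0} : Multiset (EuclideanSpace ℝ (Fin 2))) := by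
  rintro ⟨f, ⟨r, hr, hf⟩, hmap⟩
  have hsides : ({dist A₁ (pt 0 0), dist A₁ (pt 1 0), 1} : Multiset ℝ).map (r * ·) =
      {dist A₂ (pt 0 0), dist A₂ (pt 1 0), 1} := by
    have h := congrArg pairDists hmap
    have hzeros : ({0, 0, 0} : Multiset ℝ).map (r * ·) = {0, 0, 0} := by simp
    rwa [pairDists_map hf, pairDists_triple, pairDists_triple, Multiset.map_add, hzeros,
      dist_pt_zero_pt_one, add_right_inj] at h
  obtain ⟨hB, hC⟩ := eq_of_map_mul_eq hr (one_le_dist_pt_one_zero h₁.2.2)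
    (dist_pt_one_zero_le_dist_pt_zero_zero h₁.2.1) (one_le_dist_pt_one_zero h₂.2.2)
    (dist_pt_one_zero_le_dist_pt_zero_zero h₂.2.1) hsides
  exact hne (eq_of_dist_pt_eq_of_dist_pt_eq zero_ne_one h₁.1 h₂.1 hB hC)
end

section
/- Let 0 < α ≤ β ≤ γ with α + β + γ = π. Let C = (1,0), A = (cos 2β, sin 2β), B = (cos 2α, −sin 2α) on the unit circle. Then the interior angle of triangle ABC at A equals α and the interior angle at B equals β (and hence the angle at C equals γ). -/
open Real EuclideanGeometry

/-! Every point of the triangle lies on the unit circle, and a chord from `circlePt b` to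
`circlePt a` is `2 sin ((a - b) / 2)` times a unit vector of direction `(a + b) / 2 + π / 2`.
Hence the angle at `circlePt b` between two chords is the angle between two unit vectors whose
directions differ by `(a - c) / 2`: the inscribed angle theorem. Each vertex of the triangle is
then read off with an argument chosen so that the other two vertices lie in `(b, b + 2π)`. -/

noncomputable def circlePt (θ : ℝ) : EuclideanSpace ℝ (Fin 2) := pt (cos θ) (sin θ)

lemma pt_sub_pt (a b c d : ℝ) : pt a b - pt c d = pt (a - c) (b - d) := by
  ext i; fin_cases i <;> simp [pt]

lemma smul_pt (r a b : ℝ) : r • pt a b = pt (r * a) (r * b) := by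
  ext i; fin_cases i <;> simp [pt]

lemma inner_circlePt (p q : ℝ) : inner ℝ (circlePt p) (circlePt q) = cos (p - q) := by
  simp [circlePt, pt, EuclideanSpace.inner_eq_star_dotProduct, dotProduct, Fin.sum_univ_two,
    cos_sub]
  ring

lemma norm_circlePt (θ : ℝ) : ‖circlePt θ‖ = 1 := by
  simp [circlePt, pt, EuclideanSpace.norm_eq, Fin.sum_univ_two]

lemma InnerProductGeometry.angle_circlePt (p q : ℝ) :
    angle (circlePt p) (circlePt q) = arccos (cos (p - q)) := by
  rw [angle, inner_circlePt, norm_circlePt, norm_circlePt, mul_one, div_one]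

lemma circlePt_sub_circlePt (a b : ℝ) :
    circlePt a - circlePt b = (2 * sin ((a - b) / 2)) • circlePt ((a + b) / 2 + π / 2) := by
  rw [circlePt, circlePt, circlePt, pt_sub_pt, smul_pt, cos_sub_cos, sin_sub_sin,
    cos_add_pi_div_two, sin_add_pi_div_two]
  congr 1; ring

theorem EuclideanGeometry.angle_circlePt {a b c : ℝ} (hba : b < a) (hab : a < b + 2 * π)
    (hbc : b < c) (hcb : c < b + 2 * π) :
    angle (circlePt a) (circlePt b) (circlePt c) = |a - c| / 2 := by
  have sin_half_pos : ∀ {x}, b < x → x < b + 2 * π → 0 < 2 * sin ((x - b) / 2) := fun h₁ h₂ =>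
    mul_pos two_pos (sin_pos_of_pos_of_lt_pi (by linarith) (by linarith))
  rw [angle, vsub_eq_sub, vsub_eq_sub, circlePt_sub_circlePt, circlePt_sub_circlePt,
    InnerProductGeometry.angle_smul_left_of_pos _ _ (sin_half_pos hba hab),
    InnerProductGeometry.angle_smul_right_of_pos _ _ (sin_half_pos hbc hcb),
    InnerProductGeometry.angle_circlePt,
    show (a + b) / 2 + π / 2 - ((c + b) / 2 + π / 2) = (a - c) / 2 by ring, ← cos_abs, abs_div,
    abs_two]
  have hac : |a - c| < 2 * π := abs_sub_lt_iff.2 ⟨by linarith, by linarith⟩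
  exact arccos_cos (by positivity) (by linarith)

/-- The circle normal form: the inscribed triangle with C = (1,0),
A = (cos 2β, sin 2β), B = (cos 2α, -sin 2α) has angles α at A, β at B and γ at C. -/
theorem stmt13 (α β γ : ℝ) (hα : 0 < α) (hαβ : α ≤ β) (hβγ : β ≤ γ)
    (hsum : α + β + γ = π) :
    EuclideanGeometry.angle (pt (Real.cos (2*α)) (-Real.sin (2*α)))
      (pt (Real.cos (2*β)) (Real.sin (2*β))) (pt 1 0) = α ∧
    EuclideanGeometry.angle (pt (Real.cos (2*β)) (Real.sin (2*β)))
      (pt (Real.cos (2*α)) (-Real.sin (2*α))) (pt 1 0) = β ∧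
    EuclideanGeometry.angle (pt (Real.cos (2*β)) (Real.sin (2*β)))
      (pt 1 0) (pt (Real.cos (2*α)) (-Real.sin (2*α))) = γ := by
  have hβ : 0 < β := hα.trans_le hαβ
  have hγ : 0 < γ := hβ.trans_le hβγ
  have hA : pt (cos (2 * β)) (sin (2 * β)) = circlePt (2 * β) := rfl
  have hB : pt (cos (2 * α)) (-sin (2 * α)) = circlePt (-(2 * α)) := by
    rw [circlePt, cos_neg, sin_neg]
  have hB' : pt (cos (2 * α)) (-sin (2 * α)) = circlePt (2 * π - 2 * α) := by
    rw [circlePt, cos_two_pi_sub, sin_two_pi_sub]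
  have hC : pt 1 0 = circlePt 0 := by rw [circlePt, cos_zero, sin_zero]
  have hC' : pt 1 0 = circlePt (2 * π) := by rw [circlePt, cos_two_pi, sin_two_pi]
  refine ⟨?_, ?_, ?_⟩
  · rw [hB', hA, hC', angle_circlePt (by linarith) (by linarith) (by linarith) (by linarith)]
    rw [show 2 * π - 2 * α - 2 * π = -(2 * α) by ring, abs_neg, abs_of_pos (by linarith)]
    ring
  · rw [hA, hB, hC, angle_circlePt (by linarith) (by linarith) (by linarith) (by linarith),
      sub_zero, abs_of_pos (by linarith)]
    ring
  · rw [hA, hC, hB', angle_circlePt (by linarith) (by linarith) (by linarith) (by linarith),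
      abs_of_neg (by linarith)]
    linarith
end
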